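/- arXiv:2502.05790 — 3 statements merged into one kernel-verified Lean document; each statement's English description precedes it below -/
import Mathlib

section
/- Let τ be a positive integer and let G_0, G_1, …, G_{τ−1} be matrices in ℝ^{m×n}. Then ‖G_0‖_F² ≤ (2/τ) · Σ_{r=0}^{τ−1} ‖G_r‖_F² + (τ−1) · Σ_{r=0}^{τ−2} ‖G_{r+1} − G_r‖_F². -/
open Finset

/-- The squared Frobenius norm of a real matrix: the sum of squares of all entries. -/
noncomputable def frobSq {a b : ℕ} (A : Matrix (Fin a) (Fin b) ℝ) : ℝ :=
  ∑ i, ∑ j, (A i j) ^ 2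

/-!
The inequality holds for any sequence in a seminormed group. Telescoping and Cauchy–Schwarz give
`‖x r - x 0‖² ≤ r D`, where `D` is the sum of the squared increments, so
`‖x 0‖² ≤ 2‖x r‖² + 2‖x r - x 0‖² ≤ 2‖x r‖² + 2 r D` for every `r < τ`.
Averaging over `r` and using `∑_{r<τ} 2r = τ(τ-1)` yields the claim; the Frobenius case
is the instance `E = ℝ^{m×n}` with the Frobenius norm.
-/

section Increments

variable {E : Type*} [SeminormedAddCommGroup E]

theorem sq_norm_sub_le_mul_sum_sq_norm_sub (x : ℕ → E) (r : ℕ) :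
    ‖x r - x 0‖ ^ 2 ≤ r * ∑ s ∈ range r, ‖x (s + 1) - x s‖ ^ 2 := by
  calc ‖x r - x 0‖ ^ 2 = ‖∑ s ∈ range r, (x (s + 1) - x s)‖ ^ 2 := by rw [sum_range_sub]
    _ ≤ (∑ s ∈ range r, ‖x (s + 1) - x s‖) ^ 2 := by gcongr; exact norm_sum_le _ _
    _ ≤ r * ∑ s ∈ range r, ‖x (s + 1) - x s‖ ^ 2 := by
        simpa using sq_sum_le_card_mul_sum_sq (s := range r) (f := fun s => ‖x (s + 1) - x s‖)

theorem sq_norm_le_two_mul_sq_norm_add (x : ℕ → E) {r N : ℕ} (hr : r ≤ N) :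
    ‖x 0‖ ^ 2 ≤ 2 * ‖x r‖ ^ 2 + 2 * r * ∑ s ∈ range N, ‖x (s + 1) - x s‖ ^ 2 := by
  have hsub : ∑ s ∈ range r, ‖x (s + 1) - x s‖ ^ 2 ≤ ∑ s ∈ range N, ‖x (s + 1) - x s‖ ^ 2 :=
    sum_le_sum_of_subset_of_nonneg (range_subset_range.2 hr) fun _ _ _ => sq_nonneg _
  calc ‖x 0‖ ^ 2 ≤ (‖x r‖ + ‖x r - x 0‖) ^ 2 := by
        gcongr; exact norm_le_norm_add_norm_sub _ _
    _ ≤ 2 * (‖x r‖ ^ 2 + ‖x r - x 0‖ ^ 2) := add_sq_le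
    _ ≤ 2 * (‖x r‖ ^ 2 + r * ∑ s ∈ range N, ‖x (s + 1) - x s‖ ^ 2) := by
        gcongr
        exact (sq_norm_sub_le_mul_sum_sq_norm_sub x r).trans (by gcongr)
    _ = _ := by ring

theorem sum_range_two_mul_natCast (τ : ℕ) : ∑ r ∈ range τ, 2 * (r : ℝ) = τ * (τ - 1) := by
  induction τ with
  | zero => simp
  | succ k ih => rw [sum_range_succ, ih]; push_cast; ring

theorem sq_norm_le_average_add_sum_sq_norm_sub (τ : ℕ) (hτ : 0 < τ) (x : ℕ → E) :
    ‖x 0‖ ^ 2 ≤ (2 / (τ : ℝ)) * ∑ r ∈ range τ, ‖x r‖ ^ 2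
      + ((τ : ℝ) - 1) * ∑ r ∈ range (τ - 1), ‖x (r + 1) - x r‖ ^ 2 := by
  set D := ∑ r ∈ range (τ - 1), ‖x (r + 1) - x r‖ ^ 2
  have hτ' : (0 : ℝ) < τ := by exact_mod_cast hτ
  have hsum : (τ : ℝ) * ‖x 0‖ ^ 2 ≤ 2 * ∑ r ∈ range τ, ‖x r‖ ^ 2 + τ * (τ - 1) * D :=
    calc (τ : ℝ) * ‖x 0‖ ^ 2 = ∑ r ∈ range τ, ‖x 0‖ ^ 2 := by simp
      _ ≤ ∑ r ∈ range τ, (2 * ‖x r‖ ^ 2 + 2 * r * D) :=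
        sum_le_sum fun r hr => sq_norm_le_two_mul_sq_norm_add x (by grind)
      _ = _ := by rw [sum_add_distrib, ← mul_sum, ← sum_mul, sum_range_two_mul_natCast]
  rw [div_mul_eq_mul_div, div_add' _ _ _ hτ'.ne', le_div_iff₀ hτ']
  linarith

end Increments

section Frobenius

attribute [local instance] Matrix.frobeniusNormedAddCommGroup

theorem frobSq_eq_sq_frobenius_norm {a b : ℕ} (A : Matrix (Fin a) (Fin b) ℝ) :
    frobSq A = ‖A‖ ^ 2 := by
  rw [Matrix.frobenius_norm_def, ← Real.rpow_natCast, ← Real.rpow_mul (by positivity)]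
  norm_num [frobSq, Real.rpow_two]

/-- For a positive integer `τ` and matrices `G 0, …, G (τ-1)` in `ℝ^{m×n}`,
`‖G 0‖_F² ≤ (2/τ) ∑_{r<τ} ‖G r‖_F² + (τ-1) ∑_{r<τ-1} ‖G (r+1) - G r‖_F²`. -/
theorem stmt0 {m n : ℕ} (τ : ℕ) (hτ : 0 < τ) (G : ℕ → Matrix (Fin m) (Fin n) ℝ) :
    frobSq (G 0) ≤ (2 / (τ : ℝ)) * ∑ r ∈ Finset.range τ, frobSq (G r)
      + ((τ : ℝ) - 1) * ∑ r ∈ Finset.range (τ - 1), frobSq (G (r + 1) - G r) := by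
  simpa only [frobSq_eq_sq_frobenius_norm] using sq_norm_le_average_add_sum_sq_norm_sub τ hτ G

end Frobenius
end

section
/- Let u_1, …, u_m be an orthonormal basis of ℝ^m and let 𝓘 be a random subset of {1,…,m} of size r with marginal inclusion probabilities p_j = Pr[j ∈ 𝓘], and set δ = min_{j∈[m]} p_j. Let P ∈ ℝ^{m×r} be the matrix whose columns are u_j for j ∈ 𝓘, and let G be a random matrix in ℝ^{m×n} that is independent of 𝓘. Then E[‖(I − P Pᵀ) G‖_F²] ≤ (1 − δ) · E[‖G‖_F²]. -/
/-! Since the columns of `P` are orthonormal, `P Pᵀ` is an orthogonal projector, so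
`‖(I − P Pᵀ) G‖_F² = ‖G‖_F² − ‖Pᵀ G‖_F²`, and `‖Pᵀ G‖_F² = ∑_{j ∈ 𝓘} e_j` where
`e_j = ‖u_jᵀ G‖²` is the energy of `G` along `u_j`; by Parseval `∑_j e_j = ‖G‖_F²`.
Averaging over `𝓘`, the energy along `u_j` is removed with probability `p_j ≥ δ`, hence
`E‖(I − P Pᵀ) G‖_F² = ∑_j (1 − p_j) E e_j ≤ (1 − δ) E‖G‖_F²`. -/

open Finset Matrix MeasureTheory

lemma Matrix.submatrix_id_mul_transpose_eq_one {l m n R : Type*} [Fintype n] [DecidableEq l]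
    [DecidableEq m] [Semiring R] {U : Matrix m n R} (hU : U * Uᵀ = 1) {e : l → m}
    (he : Function.Injective e) : U.submatrix e id * (U.submatrix e id)ᵀ = 1 := by
  rw [transpose_submatrix, ← submatrix_mul _ _ _ _ _ Function.bijective_id, hU, submatrix_one _ he]

lemma frobSq_eq_trace {a b : ℕ} (A : Matrix (Fin a) (Fin b) ℝ) : frobSq A = trace (Aᵀ * A) := by
  rw [frobSq, trace, Finset.sum_comm]
  simp [Matrix.mul_apply, sq]

lemma frobSq_mul_of_transpose_mul_self {a b c : ℕ} {U : Matrix (Fin a) (Fin b) ℝ}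
    (hU : Uᵀ * U = 1) (G : Matrix (Fin b) (Fin c) ℝ) : frobSq (U * G) = frobSq G := by
  rw [frobSq_eq_trace, frobSq_eq_trace, transpose_mul, Matrix.mul_assoc, ← Matrix.mul_assoc Uᵀ,
    hU, Matrix.one_mul]

lemma frobSq_one_sub_mul_transpose_mul {a b c : ℕ} {P : Matrix (Fin a) (Fin b) ℝ}
    (hP : Pᵀ * P = 1) (G : Matrix (Fin a) (Fin c) ℝ) :
    frobSq ((1 - P * Pᵀ) * G) = frobSq G - frobSq (Pᵀ * G) := by
  have hidem : (1 - P * Pᵀ)ᵀ * (1 - P * Pᵀ) = 1 - P * Pᵀ := by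
    simp only [transpose_sub, transpose_one, transpose_mul, transpose_transpose, Matrix.mul_sub,
      Matrix.sub_mul, Matrix.mul_one, Matrix.one_mul, Matrix.mul_assoc, ← Matrix.mul_assoc Pᵀ P, hP]
    abel
  have hGram : ((1 - P * Pᵀ) * G)ᵀ * ((1 - P * Pᵀ) * G) = Gᵀ * G - (Pᵀ * G)ᵀ * (Pᵀ * G) := by
    rw [transpose_mul, Matrix.mul_assoc, ← Matrix.mul_assoc _ _ G, hidem]
    simp only [transpose_mul, transpose_transpose, Matrix.sub_mul, Matrix.mul_sub, Matrix.one_mul,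
      Matrix.mul_assoc]
  rw [frobSq_eq_trace, frobSq_eq_trace, frobSq_eq_trace, hGram, trace_sub]

lemma frobSq_submatrix_orderEmbOfFin {a b r : ℕ} (M : Matrix (Fin a) (Fin b) ℝ)
    {S : Finset (Fin a)} (h : S.card = r) :
    frobSq (M.submatrix (S.orderEmbOfFin h) id) = ∑ i ∈ S, ∑ k, M i k ^ 2 := by
  conv_rhs => rw [← S.map_orderEmbOfFin_univ h, Finset.sum_map]
  rfl

lemma frobSq_one_sub_mul_transpose_mul_of_submatrix {a b r : ℕ} {U : Matrix (Fin a) (Fin a) ℝ}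
    (hU : U * Uᵀ = 1) {S : Finset (Fin a)} (h : S.card = r) (G : Matrix (Fin a) (Fin b) ℝ) :
    frobSq ((1 - (U.submatrix (S.orderEmbOfFin h) id)ᵀ * U.submatrix (S.orderEmbOfFin h) id) * G)
      = frobSq (U * G) - ∑ j ∈ S, ∑ k, (U * G) j k ^ 2 := by
  set V := U.submatrix (S.orderEmbOfFin h) id
  have hVG : V * G = (U * G).submatrix (S.orderEmbOfFin h) id := by
    rw [submatrix_mul _ _ _ _ _ Function.bijective_id, submatrix_id_id]
  have hV : Vᵀᵀ * Vᵀ = 1 := by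
    rw [transpose_transpose]
    exact submatrix_id_mul_transpose_eq_one hU (S.orderEmbOfFin h).injective
  have hproj := frobSq_one_sub_mul_transpose_mul hV G
  rw [transpose_transpose] at hproj
  rw [hproj, hVG, frobSq_submatrix_orderEmbOfFin, frobSq_mul_of_transpose_mul_self
    (mul_eq_one_comm.mp hU)]

lemma sum_mul_sum_mem_eq_sum_sum_filter_mul {σ ι : Type*} [Fintype σ] [Fintype ι]
    [DecidableEq ι] (w : σ → ℝ) (s : σ → Finset ι) (x : ι → ℝ) :
    ∑ S, w S * ∑ j ∈ s S, x j = ∑ j, (∑ S with j ∈ s S, w S) * x j := by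
  simp_rw [Finset.mul_sum, Finset.sum_mul]
  exact Finset.sum_comm' (by simp)

lemma sum_mul_sub_sum_mem_le {σ ι : Type*} [Fintype σ] [Fintype ι] [DecidableEq ι]
    {w : σ → ℝ} (hw : ∑ S, w S = 1) (s : σ → Finset ι) {x : ι → ℝ} (hx : ∀ j, 0 ≤ x j)
    {δ : ℝ} (hδ : ∀ j, δ ≤ ∑ S with j ∈ s S, w S) :
    ∑ S, w S * (∑ j, x j - ∑ j ∈ s S, x j) ≤ (1 - δ) * ∑ j, x j := by
  have hδx : ∑ j, δ * x j ≤ ∑ j, (∑ S with j ∈ s S, w S) * x j :=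
    Finset.sum_le_sum fun j _ => mul_le_mul_of_nonneg_right (hδ j) (hx j)
  simp_rw [mul_sub, Finset.sum_sub_distrib, ← Finset.sum_mul, hw,
    sum_mul_sum_mem_eq_sum_sum_filter_mul, ← Finset.mul_sum] at hδx ⊢
  linarith

lemma MeasureTheory.Integrable.of_nonneg_of_integrable_sum {ι Ω : Type*} [Fintype ι]
    [MeasurableSpace Ω] {μ : Measure Ω} {F : ι → Ω → ℝ} (hF : ∀ j ω, 0 ≤ F j ω)
    (hFm : ∀ j, AEStronglyMeasurable (F j) μ) (hsum : Integrable (fun ω => ∑ j, F j ω) μ)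
    (j : ι) : Integrable (F j) μ :=
  hsum.mono' (hFm j) <| .of_forall fun ω => by
    rw [Real.norm_eq_abs, abs_of_nonneg (hF j ω)]
    exact Finset.single_le_sum (fun j _ => hF j ω) (Finset.mem_univ j)

lemma MeasureTheory.integral_sum_sub_sum_mem {ι Ω : Type*} [Fintype ι] [MeasurableSpace Ω]
    {μ : Measure Ω} {F : ι → Ω → ℝ} (hF : ∀ j, Integrable (F j) μ) (s : Finset ι) :
    ∫ ω, (∑ j, F j ω - ∑ j ∈ s, F j ω) ∂μ = ∑ j, ∫ ω, F j ω ∂μ - ∑ j ∈ s, ∫ ω, F j ω ∂μ := by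
  rw [integral_sub (integrable_finsetSum _ fun j _ => hF j) (integrable_finsetSum _ fun j _ => hF j),
    integral_finsetSum _ fun j _ => hF j, integral_finsetSum _ fun j _ => hF j]

theorem stmt3_general {m n r : ℕ}
    {Ω : Type} [MeasurableSpace Ω] (μ : MeasureTheory.Measure Ω)
    (u : Fin m → Fin m → ℝ)
    (hu : ∀ i j, u i ⬝ᵥ u j = if i = j then (1 : ℝ) else 0)
    -- `w` is the distribution of the random size-`r` subset `𝓘`
    (w : {S : Finset (Fin m) // S.card = r} → ℝ)
    (hw1 : ∑ S, w S = 1)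
    -- `P S` is the matrix whose columns are the vectors `u j` for `j ∈ S`
    (P : {S : Finset (Fin m) // S.card = r} → Matrix (Fin m) (Fin r) ℝ)
    (hP : ∀ S, P S = Matrix.of fun i c => u (S.1.orderEmbOfFin S.2 c) i)
    -- marginal inclusion probabilities and their minimum `δ`
    (p : Fin m → ℝ)
    (hp : ∀ j, p j = ∑ S ∈ Finset.univ.filter (fun S => j ∈ S.1), w S)
    (δ : ℝ) (hδ : δ = ⨅ j, p j)
    -- the random matrix `G`, independent of `𝓘`
    (G : Ω → Matrix (Fin m) (Fin n) ℝ)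
    (hGmeas : ∀ i j, Measurable fun ω => G ω i j)
    (hGint : Integrable (fun ω => frobSq (G ω)) μ) :
    ∑ S, w S * ∫ ω, frobSq ((1 - P S * (P S)ᵀ) * G ω) ∂μ
      ≤ (1 - δ) * ∫ ω, frobSq (G ω) ∂μ := by
  set U : Matrix (Fin m) (Fin m) ℝ := Matrix.of u
  have hU : U * Uᵀ = 1 := by
    ext i j; simpa [Matrix.mul_apply, dotProduct, Matrix.one_apply, U] using hu i j
  have hPU (S : {S : Finset (Fin m) // S.card = r}) :
      P S = (U.submatrix (S.1.orderEmbOfFin S.2) id)ᵀ := by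
    ext; simp [hP, U]
  set F : Fin m → Ω → ℝ := fun j ω => ∑ k, (U * G ω) j k ^ 2
  have hFsum (ω : Ω) : ∑ j, F j ω = frobSq (G ω) :=
    frobSq_mul_of_transpose_mul_self (mul_eq_one_comm.mp hU) (G ω)
  have hproj (S : {S : Finset (Fin m) // S.card = r}) (ω : Ω) :
      frobSq ((1 - P S * (P S)ᵀ) * G ω) = ∑ j, F j ω - ∑ j ∈ S.1, F j ω := by
    rw [hPU, transpose_transpose]
    exact frobSq_one_sub_mul_transpose_mul_of_submatrix hU S.2 (G ω)
  have hF0 (j : Fin m) (ω : Ω) : 0 ≤ F j ω := sum_nonneg fun k _ => sq_nonneg _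
  have hFint : ∀ j, Integrable (F j) μ := by
    refine .of_nonneg_of_integrable_sum hF0
      (fun j => Measurable.aestronglyMeasurable ?_) (by simpa only [hFsum] using hGint)
    simp only [F, U, Matrix.mul_apply, Matrix.of_apply]
    fun_prop
  have hδp (j : Fin m) : δ ≤ ∑ S with j ∈ S.1, w S :=
    hp j ▸ hδ ▸ ciInf_le (Set.finite_range p).bddBelow j
  calc ∑ S, w S * ∫ ω, frobSq ((1 - P S * (P S)ᵀ) * G ω) ∂μ
      = ∑ S, w S * (∑ j, ∫ ω, F j ω ∂μ - ∑ j ∈ S.1, ∫ ω, F j ω ∂μ) := by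
        simp_rw [hproj, integral_sum_sub_sum_mem hFint]
    _ ≤ (1 - δ) * ∑ j, ∫ ω, F j ω ∂μ :=
        sum_mul_sub_sum_mem_le hw1 _ (fun j => integral_nonneg (hF0 j)) hδp
    _ = (1 - δ) * ∫ ω, frobSq (G ω) ∂μ := by
        rw [← integral_finsetSum _ fun j _ => hFint j]
        simp_rw [hFsum]

/-- Let `u 1, …, u m` be an orthonormal basis of `ℝ^m`, `𝓘` a random size-`r`
subset of `{1,…,m}` with marginal inclusion probabilities `p j` and `δ = min_j p j`, let `P S`
be the matrix whose columns are `u j`, `j ∈ S`, and let `G` be a random matrix in `ℝ^{m×n}`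
independent of `𝓘` (independence is modelled by the joint expectation being the product
`∑_S w S * ∫ · dμ`).  Then `E[‖(I − P Pᵀ) G‖_F²] ≤ (1 − δ) E[‖G‖_F²]`. -/
theorem stmt3 {m n r : ℕ} [NeZero m]
    {Ω : Type} [MeasurableSpace Ω] (μ : MeasureTheory.Measure Ω) [IsProbabilityMeasure μ]
    (u : Fin m → Fin m → ℝ)
    (hu : ∀ i j, u i ⬝ᵥ u j = if i = j then (1 : ℝ) else 0)
    -- `w` is the distribution of the random size-`r` subset `𝓘`
    (w : {S : Finset (Fin m) // S.card = r} → ℝ)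
    (hw0 : ∀ S, 0 ≤ w S) (hw1 : ∑ S, w S = 1)
    -- `P S` is the matrix whose columns are the vectors `u j` for `j ∈ S`
    (P : {S : Finset (Fin m) // S.card = r} → Matrix (Fin m) (Fin r) ℝ)
    (hP : ∀ S, P S = Matrix.of fun i c => u (S.1.orderEmbOfFin S.2 c) i)
    -- marginal inclusion probabilities and their minimum `δ`
    (p : Fin m → ℝ)
    (hp : ∀ j, p j = ∑ S ∈ Finset.univ.filter (fun S => j ∈ S.1), w S)
    (δ : ℝ) (hδ : δ = ⨅ j, p j)
    -- the random matrix `G`, independent of `𝓘`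
    (G : Ω → Matrix (Fin m) (Fin n) ℝ)
    (hGmeas : ∀ i j, Measurable fun ω => G ω i j)
    (hGint : Integrable (fun ω => frobSq (G ω)) μ) :
    ∑ S, w S * ∫ ω, frobSq ((1 - P S * (P S)ᵀ) * G ω) ∂μ
      ≤ (1 - δ) * ∫ ω, frobSq (G ω) ∂μ :=
  stmt3_general μ u hu w hw1 P hP p hp δ hδ G hGmeas hGint
end

section
/- Let g ∈ ℝ^{m×n} be fixed, let β₁ ∈ (0,1], and let σ ≥ 0. Let G be a random matrix in ℝ^{m×n} with E[G] = g and E[‖G − g‖_F²] ≤ σ². Let u_1, …, u_m be an orthonormal basis of ℝ^m, let 𝓘 be a random size-r subset of {1,…,m}, independent of G, with marginal inclusion probabilities all at least δ, and let P ∈ ℝ^{m×r} have columns u_j for j ∈ 𝓘. Define M̃ = β₁ · P Pᵀ G. Then E[‖M̃ − g‖_F²] ≤ (1 − (2β₁ − β₁²)·δ) · ‖g‖_F² + β₁² σ². -/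
open Finset Matrix MeasureTheory

section Aux
variable {m n r : ℕ}

lemma frobSq_nonneg {a b : ℕ} (A : Matrix (Fin a) (Fin b) ℝ) : 0 ≤ frobSq A := by
  unfold frobSq; positivity

lemma frob_expand {a b : ℕ} (c : ℝ) (A B : Matrix (Fin a) (Fin b) ℝ) :
    frobSq (c • A + B) = c^2 * frobSq A + (∑ i, ∑ j, (2*c*B i j) * A i j) + frobSq B := by
  simp only [frobSq, Matrix.add_apply, Matrix.smul_apply, smul_eq_mul, Finset.mul_sum,
    ← Finset.sum_add_distrib]
  exact Finset.sum_congr rfl fun i _ => Finset.sum_congr rfl fun j _ => by ring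

lemma sum_orderEmb {S : Finset (Fin m)} (h : S.card = r) (f : Fin m → ℝ) :
    ∑ c : Fin r, f (S.orderEmbOfFin h c) = ∑ j ∈ S, f j := by
  have himg : Finset.image (S.orderEmbOfFin h) Finset.univ = S := by
    apply Finset.coe_injective
    rw [Finset.coe_image, Finset.coe_univ, Set.image_univ, Finset.range_orderEmbOfFin]
  conv_rhs => rw [← himg]
  rw [Finset.sum_image (fun a _ b _ hab => (S.orderEmbOfFin h).injective hab)]

lemma utu (u : Fin m → Fin m → ℝ)
    (hu : ∀ i j, u i ⬝ᵥ u j = if i = j then (1:ℝ) else 0) (i k : Fin m) :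
    ∑ j, u j i * u j k = if i = k then 1 else 0 := by
  have h1 : (Matrix.of u) * (Matrix.of u)ᵀ = 1 := by
    ext a b
    simpa [Matrix.mul_apply, Matrix.one_apply, dotProduct] using hu a b
  have h2 := mul_eq_one_comm.mp h1
  have h3 := congrFun (congrFun h2 i) k
  simpa [Matrix.mul_apply, Matrix.one_apply, mul_comm] using h3

lemma parseval (u : Fin m → Fin m → ℝ)
    (hu : ∀ i j, u i ⬝ᵥ u j = if i = j then (1:ℝ) else 0) (v : Fin m → ℝ) :
    ∑ j, (u j ⬝ᵥ v) ^ 2 = ∑ i, (v i) ^ 2 := by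
  have h1 : ∀ j, (u j ⬝ᵥ v)^2 = ∑ i, ∑ k, (v i * v k) * (u j i * u j k) := by
    intro j
    rw [sq, dotProduct, Finset.sum_mul_sum]
    exact Finset.sum_congr rfl fun i _ => Finset.sum_congr rfl fun k _ => by ring
  calc ∑ j, (u j ⬝ᵥ v)^2 = ∑ i, ∑ k, (v i * v k) * ∑ j, (u j i * u j k) := by
        simp_rw [h1, Finset.mul_sum]
        rw [Finset.sum_comm]
        exact Finset.sum_congr rfl fun i _ => Finset.sum_comm
    _ = ∑ i, (v i)^2 := by
        simp [utu u hu, mul_ite, Finset.sum_ite_eq, sq]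

lemma sq_sum_proj (u : Fin m → Fin m → ℝ)
    (hu : ∀ i j, u i ⬝ᵥ u j = if i = j then (1:ℝ) else 0) (S : Finset (Fin m))
    (t : Fin m → ℝ) :
    ∑ i, (∑ j ∈ S, u j i * t j)^2 = ∑ j ∈ S, (t j)^2 := by
  have h1 : ∀ i, (∑ j ∈ S, u j i * t j)^2 = ∑ j ∈ S, ∑ k ∈ S, (t j * t k) * (u j i * u k i) := by
    intro i
    rw [sq, Finset.sum_mul_sum]
    exact Finset.sum_congr rfl fun j _ => Finset.sum_congr rfl fun k _ => by ring
  calc ∑ i, (∑ j ∈ S, u j i * t j)^2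
      = ∑ j ∈ S, ∑ k ∈ S, (t j * t k) * ∑ i, (u j i * u k i) := by
        simp_rw [h1, Finset.mul_sum]
        rw [Finset.sum_comm]
        exact Finset.sum_congr rfl fun j _ => Finset.sum_comm
    _ = ∑ j ∈ S, (t j)^2 := by
        refine Finset.sum_congr rfl fun j hj => ?_
        have hd : ∀ k, ∑ i, u j i * u k i = if j = k then (1:ℝ) else 0 := by
          intro k; rw [← hu j k]; rfl
        simp [hd, mul_ite, Finset.sum_ite_eq, hj, sq]

-- (Q*X) rewriting
lemma QX_apply (u : Fin m → Fin m → ℝ) {S : Finset (Fin m)}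
    {Q : Matrix (Fin m) (Fin m) ℝ} (hQ : ∀ i k, Q i k = ∑ j ∈ S, u j i * u j k)
    (X : Matrix (Fin m) (Fin n) ℝ) (i : Fin m) (c : Fin n) :
    (Q * X) i c = ∑ j ∈ S, u j i * (u j ⬝ᵥ fun i' => X i' c) := by
  simp only [Matrix.mul_apply, hQ, Finset.sum_mul, dotProduct, Finset.mul_sum]
  rw [Finset.sum_comm]
  exact Finset.sum_congr rfl fun j _ => Finset.sum_congr rfl fun k _ => by ring

lemma frobQ (u : Fin m → Fin m → ℝ)
    (hu : ∀ i j, u i ⬝ᵥ u j = if i = j then (1:ℝ) else 0) {S : Finset (Fin m)}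
    {Q : Matrix (Fin m) (Fin m) ℝ} (hQ : ∀ i k, Q i k = ∑ j ∈ S, u j i * u j k)
    (X : Matrix (Fin m) (Fin n) ℝ) :
    frobSq (Q * X) = ∑ j ∈ S, ∑ c, (u j ⬝ᵥ fun i => X i c)^2 := by
  rw [frobSq, Finset.sum_comm]
  calc ∑ c, ∑ i, ((Q * X) i c)^2
      = ∑ c, ∑ j ∈ S, (u j ⬝ᵥ fun i => X i c)^2 := by
        refine Finset.sum_congr rfl fun c _ => ?_
        simp_rw [QX_apply u hQ X]
        exact sq_sum_proj u hu S _
    _ = ∑ j ∈ S, ∑ c, (u j ⬝ᵥ fun i => X i c)^2 := Finset.sum_comm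

lemma frob_as_coords (u : Fin m → Fin m → ℝ)
    (hu : ∀ i j, u i ⬝ᵥ u j = if i = j then (1:ℝ) else 0)
    (X : Matrix (Fin m) (Fin n) ℝ) :
    frobSq X = ∑ j : Fin m, ∑ c, (u j ⬝ᵥ fun i => X i c)^2 := by
  calc frobSq X = ∑ c, ∑ i, (X i c)^2 := by rw [frobSq]; exact Finset.sum_comm
    _ = ∑ c, ∑ j, (u j ⬝ᵥ fun i => X i c)^2 :=
        Finset.sum_congr rfl fun c _ => (parseval u hu _).symm
    _ = ∑ j : Fin m, ∑ c, (u j ⬝ᵥ fun i => X i c)^2 := Finset.sum_comm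

lemma dotQ (u : Fin m → Fin m → ℝ) {S : Finset (Fin m)}
    {Q : Matrix (Fin m) (Fin m) ℝ} (hQ : ∀ i k, Q i k = ∑ j ∈ S, u j i * u j k)
    (X : Matrix (Fin m) (Fin n) ℝ) :
    ∑ i, ∑ c, (Q * X) i c * X i c = ∑ j ∈ S, ∑ c, (u j ⬝ᵥ fun i => X i c)^2 := by
  rw [Finset.sum_comm]
  calc ∑ c, ∑ i, (Q * X) i c * X i c
      = ∑ c, ∑ j ∈ S, (u j ⬝ᵥ fun i => X i c)^2 := by
        refine Finset.sum_congr rfl fun c _ => ?_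
        simp_rw [QX_apply u hQ X, Finset.sum_mul]
        rw [Finset.sum_comm]
        refine Finset.sum_congr rfl fun j _ => ?_
        calc ∑ i, u j i * (u j ⬝ᵥ fun i' => X i' c) * X i c
            = (u j ⬝ᵥ fun i' => X i' c) * ∑ i, u j i * X i c := by
              rw [Finset.mul_sum]
              exact Finset.sum_congr rfl fun i _ => by ring
          _ = (u j ⬝ᵥ fun i => X i c)^2 := by rw [sq]; rfl
    _ = ∑ j ∈ S, ∑ c, (u j ⬝ᵥ fun i => X i c)^2 := Finset.sum_comm

end Aux

/-- Let `g ∈ ℝ^{m×n}` be fixed, `β₁ ∈ (0,1]`, `σ ≥ 0`.  Let `G` be a random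
matrix with `E[G] = g` and `E[‖G − g‖_F²] ≤ σ²`.  Let `u 1, …, u m` be an orthonormal basis of
`ℝ^m`, `𝓘` a random size-`r` subset (distribution `w`), independent of `G`, with all marginal
inclusion probabilities at least `δ`, and `P S` the matrix with columns `u j`, `j ∈ S`.
With `M̃ = β₁ P Pᵀ G`, one has
`E[‖M̃ − g‖_F²] ≤ (1 − (2β₁ − β₁²) δ) ‖g‖_F² + β₁² σ²`
(the joint expectation over `(𝓘, G)` is the product `∑_S w S * ∫ · dμ`). -/
theorem stmt5 {m n r : ℕ}
    (g : Matrix (Fin m) (Fin n) ℝ) (β₁ σ δ : ℝ)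
    (hβ₁pos : 0 < β₁) (hβ₁le : β₁ ≤ 1) (hσ : 0 ≤ σ)
    {Ω : Type} [MeasurableSpace Ω] (μ : MeasureTheory.Measure Ω) [IsProbabilityMeasure μ]
    -- the random matrix `G`, independent of `𝓘`
    (G : Ω → Matrix (Fin m) (Fin n) ℝ)
    (hGmeas : ∀ i j, Measurable fun ω => G ω i j)
    (hGint1 : ∀ i j, Integrable (fun ω => G ω i j) μ)
    (hGmean : ∀ i j, ∫ ω, G ω i j ∂μ = g i j)
    (hGintsq : Integrable (fun ω => frobSq (G ω - g)) μ)
    (hGvar : ∫ ω, frobSq (G ω - g) ∂μ ≤ σ ^ 2)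
    -- orthonormal basis
    (u : Fin m → Fin m → ℝ)
    (hu : ∀ i j, u i ⬝ᵥ u j = if i = j then (1 : ℝ) else 0)
    -- `w` is the distribution of the random size-`r` subset `𝓘`
    (w : {S : Finset (Fin m) // S.card = r} → ℝ)
    (hw0 : ∀ S, 0 ≤ w S) (hw1 : ∑ S, w S = 1)
    -- `P S` is the matrix whose columns are the vectors `u j` for `j ∈ S`
    (P : {S : Finset (Fin m) // S.card = r} → Matrix (Fin m) (Fin r) ℝ)
    (hP : ∀ S, P S = Matrix.of fun i c => u (S.1.orderEmbOfFin S.2 c) i)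
    -- marginal inclusion probabilities, all at least `δ`
    (p : Fin m → ℝ)
    (hp : ∀ j, p j = ∑ S ∈ Finset.univ.filter (fun S => j ∈ S.1), w S)
    (hδ : ∀ j, δ ≤ p j) :
    ∑ S, w S * ∫ ω, frobSq (β₁ • (P S * (P S)ᵀ * G ω) - g) ∂μ
      ≤ (1 - (2 * β₁ - β₁ ^ 2) * δ) * frobSq g + β₁ ^ 2 * σ ^ 2 := by
  have hQ : ∀ S : {S : Finset (Fin m) // S.card = r}, ∀ i k,
      (P S * (P S)ᵀ) i k = ∑ j ∈ S.1, u j i * u j k := by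
    intro S i k
    rw [hP]
    simp only [Matrix.mul_apply, Matrix.transpose_apply, Matrix.of_apply]
    exact sum_orderEmb S.2 (fun j => u j i * u j k)
  set a : Fin m → ℝ := fun j => ∑ c, (u j ⬝ᵥ fun i => g i c)^2 with ha
  have ha0 : ∀ j, 0 ≤ a j := fun j => Finset.sum_nonneg fun c _ => sq_nonneg _
  have hfrobg : frobSq g = ∑ j, a j := frob_as_coords u hu g
  have hγ : 0 ≤ 2 * β₁ - β₁ ^ 2 := by nlinarith
  -- per-S bound
  have key : ∀ S : {S : Finset (Fin m) // S.card = r},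
      ∫ ω, frobSq (β₁ • (P S * (P S)ᵀ * G ω) - g) ∂μ
        ≤ β₁ ^ 2 * σ ^ 2 + frobSq g - (2 * β₁ - β₁ ^ 2) * ∑ j ∈ S.1, a j := by
    intro S
    set Q : Matrix (Fin m) (Fin m) ℝ := P S * (P S)ᵀ with hQdef
    set B : Matrix (Fin m) (Fin n) ℝ := β₁ • (Q * g) - g with hB
    -- pointwise decomposition
    have hdecomp : ∀ ω, β₁ • (Q * G ω) - g = β₁ • (Q * (G ω - g)) + B := by
      intro ω
      rw [hB, Matrix.mul_sub, smul_sub]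
      abel
    have hsplit : ∀ ω, frobSq (β₁ • (Q * G ω) - g) =
        β₁ ^ 2 * frobSq (Q * (G ω - g))
          + (∑ i, ∑ c, (2 * β₁ * B i c) * (Q * (G ω - g)) i c) + frobSq B := by
      intro ω
      rw [hdecomp ω, frob_expand]
    -- entries of A ω := Q * (G ω - g)
    have hA_meas : ∀ i c, Measurable fun ω => (Q * (G ω - g)) i c := by
      intro i c
      simp only [Matrix.mul_apply, Matrix.sub_apply]
      exact Finset.measurable_sum _ fun k _ =>
        ((hGmeas k c).sub measurable_const).const_mul _
    have hA_int : ∀ i c, Integrable (fun ω => (Q * (G ω - g)) i c) μ := by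
      intro i c
      simp only [Matrix.mul_apply, Matrix.sub_apply]
      exact integrable_finset_sum _ fun k _ =>
        (((hGint1 k c).sub (integrable_const _)).const_mul _)
    have hGgint : ∀ (k : Fin m) (c : Fin n),
        Integrable (fun ω => G ω k c - g k c) μ := fun k c => by
      exact (hGint1 k c).sub (integrable_const _)
    have hGgmean : ∀ (k : Fin m) (c : Fin n),
        ∫ ω, (G ω k c - g k c) ∂μ = 0 := by
      intro k c
      rw [integral_sub (hGint1 k c) (integrable_const _), hGmean, integral_const]
      simp
    have hA_mean : ∀ i c, ∫ ω, (Q * (G ω - g)) i c ∂μ = 0 := by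
      intro i c
      simp only [Matrix.mul_apply, Matrix.sub_apply]
      have hik : ∀ k : Fin m, Integrable (fun ω => Q i k * (G ω k c - g k c)) μ :=
        fun k => (hGgint k c).const_mul _
      rw [integral_finset_sum _ fun k _ => hik k]
      refine Finset.sum_eq_zero fun k _ => ?_
      rw [integral_const_mul, hGgmean]
      simp
    -- pointwise projector bound
    have hfA_le : ∀ ω, frobSq (Q * (G ω - g)) ≤ frobSq (G ω - g) := by
      intro ω
      rw [frobQ u hu (hQ S), frob_as_coords u hu]
      exact Finset.sum_le_sum_of_subset_of_nonneg (Finset.subset_univ _)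
        (fun j _ _ => Finset.sum_nonneg fun c _ => sq_nonneg _)
    have hfA_meas : Measurable fun ω => frobSq (Q * (G ω - g)) := by
      unfold frobSq
      exact Finset.measurable_sum _ fun i _ => Finset.measurable_sum _ fun c _ =>
        (hA_meas i c).pow_const 2
    have hfA_int : Integrable (fun ω => frobSq (Q * (G ω - g))) μ := by
      refine Integrable.mono' hGintsq hfA_meas.aestronglyMeasurable ?_
      refine Filter.Eventually.of_forall fun ω => ?_
      rw [Real.norm_eq_abs, abs_of_nonneg (frobSq_nonneg _)]
      exact hfA_le ω
    have hL_int : Integrable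
        (fun ω => ∑ i, ∑ c, (2 * β₁ * B i c) * (Q * (G ω - g)) i c) μ :=
      integrable_finset_sum _ fun i _ => integrable_finset_sum _ fun c _ =>
        ((hA_int i c).const_mul _)
    have hfA_int' : Integrable (fun ω => β₁ ^ 2 * frobSq (Q * (G ω - g))) μ :=
      hfA_int.const_mul _
    have hi1 : Integrable (fun ω => β₁ ^ 2 * frobSq (Q * (G ω - g))
        + ∑ i, ∑ c, (2 * β₁ * B i c) * (Q * (G ω - g)) i c) μ := hfA_int'.add hL_int
    have hL1 : ∀ (i : Fin m) (c : Fin n),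
        Integrable (fun ω => (2 * β₁ * B i c) * (Q * (G ω - g)) i c) μ :=
      fun i c => (hA_int i c).const_mul _
    have hL2 : ∀ i : Fin m,
        Integrable (fun ω => ∑ c, (2 * β₁ * B i c) * (Q * (G ω - g)) i c) μ :=
      fun i => integrable_finset_sum _ fun c _ => hL1 i c
    have hL_zero : ∫ ω, (∑ i, ∑ c, (2 * β₁ * B i c) * (Q * (G ω - g)) i c) ∂μ = 0 := by
      rw [integral_finset_sum _ fun i _ => hL2 i]
      refine Finset.sum_eq_zero fun i _ => ?_
      rw [integral_finset_sum _ fun c _ => hL1 i c]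
      refine Finset.sum_eq_zero fun c _ => ?_
      rw [integral_const_mul, hA_mean]
      simp
    -- compute the integral
    have hint : ∫ ω, frobSq (β₁ • (Q * G ω) - g) ∂μ
        = β₁ ^ 2 * ∫ ω, frobSq (Q * (G ω - g)) ∂μ + frobSq B := by
      simp_rw [hsplit]
      rw [integral_add hi1 (integrable_const _), integral_add hfA_int' hL_int,
        integral_const_mul, hL_zero, integral_const]
      simp
    -- frobSq B
    have hfrobB : frobSq B = frobSq g - (2 * β₁ - β₁ ^ 2) * ∑ j ∈ S.1, a j := by
      have hB' : B = β₁ • (Q * g) + (-g) := by rw [hB]; abel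
      rw [hB', frob_expand, frobQ u hu (hQ S)]
      have h2 : ∑ i, ∑ c, (2 * β₁ * (-g) i c) * (Q * g) i c
          = -(2 * β₁) * ∑ i, ∑ c, (Q * g) i c * g i c := by
        simp_rw [Finset.mul_sum]
        exact Finset.sum_congr rfl fun i _ => Finset.sum_congr rfl fun c _ => by
          simp [Matrix.neg_apply]; ring
      rw [h2, dotQ u (hQ S)]
      have h3 : frobSq (-g) = frobSq g := by
        unfold frobSq
        exact Finset.sum_congr rfl fun i _ => Finset.sum_congr rfl fun c _ => by
          simp [Matrix.neg_apply]
      rw [h3]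
      ring
    rw [hint, hfrobB]
    have hIA : ∫ ω, frobSq (Q * (G ω - g)) ∂μ ≤ σ ^ 2 :=
      le_trans (integral_mono hfA_int hGintsq hfA_le) hGvar
    have := mul_le_mul_of_nonneg_left hIA (sq_nonneg β₁)
    linarith
  -- sum over S
  calc ∑ S, w S * ∫ ω, frobSq (β₁ • (P S * (P S)ᵀ * G ω) - g) ∂μ
      ≤ ∑ S, w S * (β₁ ^ 2 * σ ^ 2 + frobSq g - (2 * β₁ - β₁ ^ 2) * ∑ j ∈ S.1, a j) :=
        Finset.sum_le_sum fun S _ => mul_le_mul_of_nonneg_left (key S) (hw0 S)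
    _ = (β₁ ^ 2 * σ ^ 2 + frobSq g) * (∑ S, w S)
          - (2 * β₁ - β₁ ^ 2) * ∑ S, w S * ∑ j ∈ S.1, a j := by
        rw [Finset.mul_sum, Finset.mul_sum, ← Finset.sum_sub_distrib]
        exact Finset.sum_congr rfl fun S _ => by ring
    _ ≤ (1 - (2 * β₁ - β₁ ^ 2) * δ) * frobSq g + β₁ ^ 2 * σ ^ 2 := by
        have hswap : ∑ S, w S * ∑ j ∈ S.1, a j = ∑ j, p j * a j := by
          have h1 : ∀ S : {S : Finset (Fin m) // S.card = r},
              w S * ∑ j ∈ S.1, a j = ∑ j, if j ∈ S.1 then w S * a j else 0 := by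
            intro S
            rw [Finset.mul_sum, Finset.sum_ite_mem, Finset.univ_inter]
          simp_rw [h1]
          rw [Finset.sum_comm]
          refine Finset.sum_congr rfl fun j _ => ?_
          rw [hp j, Finset.sum_filter, Finset.sum_mul]
          exact Finset.sum_congr rfl fun S _ => by split <;> simp
        have hge : δ * frobSq g ≤ ∑ S, w S * ∑ j ∈ S.1, a j := by
          rw [hswap, hfrobg, Finset.mul_sum]
          exact Finset.sum_le_sum fun j _ =>
            mul_le_mul_of_nonneg_right (hδ j) (ha0 j)
        have := mul_le_mul_of_nonneg_left hge hγ
        rw [hw1]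
        linarith
end
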